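/- arXiv:math/0412058 — 3 statements merged into one kernel-verified Lean document; each statement's English description precedes it below -/
import Mathlib

section
/- Let (Ω, η, ξ) and (Ω, η, ξ') be two projective triples of rational 1-forms on ℂ² with the same first two entries, where Ω ≠ (0,0). Then there exists F ∈ K such that ξ' = ξ + F·Ω and F·dΩ = −(1/2)·(dF ∧ Ω). -/
open MvPolynomial

noncomputable section

/-- The field of rational functions `ℂ(x,y)`. -/
abbrev RatF : Type := FractionRing (MvPolynomial (Fin 2) ℂ)

/-- Wedge product of two rational 1-forms: `ω ∧ θ = ω₁ θ₂ - ω₂ θ₁`. -/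
def wedge (ω θ : RatF × RatF) : RatF := ω.1 * θ.2 - ω.2 * θ.1

/-- Exterior derivative of a rational 1-form: `dω = ∂x ω₂ - ∂y ω₁`. -/
def extd (dx dy : Derivation ℂ RatF RatF) (ω : RatF × RatF) : RatF := dx ω.2 - dy ω.1

/-- Differential of a rational function: `dF = (∂x F, ∂y F)`. -/
def d0 (dx dy : Derivation ℂ RatF RatF) (F : RatF) : RatF × RatF := (dx F, dy F)

/-- The derivations `dx`, `dy` extend the partial derivatives on `ℂ[x,y]`. -/
def ExtendsPartials (dx dy : Derivation ℂ RatF RatF) : Prop :=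
  (∀ p : MvPolynomial (Fin 2) ℂ,
      dx (algebraMap (MvPolynomial (Fin 2) ℂ) RatF p)
        = algebraMap (MvPolynomial (Fin 2) ℂ) RatF (pderiv 0 p)) ∧
  (∀ p : MvPolynomial (Fin 2) ℂ,
      dy (algebraMap (MvPolynomial (Fin 2) ℂ) RatF p)
        = algebraMap (MvPolynomial (Fin 2) ℂ) RatF (pderiv 1 p))

/-- `(Ω, η, ξ)` is a projective triple: (Proj.1) `dΩ = η∧Ω`, (Proj.2) `dη = Ω∧ξ`,
(Proj.3) `dξ = ξ∧η`. -/
def IsProjTriple (dx dy : Derivation ℂ RatF RatF) (Ω η ξ : RatF × RatF) : Prop :=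
  extd dx dy Ω = wedge η Ω ∧ extd dx dy η = wedge Ω ξ ∧ extd dx dy ξ = wedge ξ η

/-! Proj.2 for both triples gives `Ω ∧ (ξ' - ξ) = 0`, so `ξ' - ξ = F Ω` as `Ω ≠ 0`.
Substituting into Proj.3, with `d(F Ω) = dF ∧ Ω + F dΩ` and `F Ω ∧ η = -F (η ∧ Ω) = -F dΩ`
by Proj.1, leaves `2 F dΩ = -dF ∧ Ω`. -/

theorem exists_smul_eq_of_mul_sub_mul_eq_zero {K : Type*} [Field K] {a b : K × K}
    (ha : a ≠ 0) (h : a.1 * b.2 - a.2 * b.1 = 0) : ∃ c : K, b = c • a := by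
  by_cases ha₁ : a.1 = 0
  · have ha₂ : a.2 ≠ 0 := fun ha₂ => ha (Prod.ext ha₁ ha₂)
    refine ⟨b.2 / a.2, Prod.ext ?_ ?_⟩
    · have hb₁ : a.2 * b.1 = 0 := by linear_combination -h + b.2 * ha₁
      simp [ha₁, (mul_eq_zero.mp hb₁).resolve_left ha₂]
    · simp [div_mul_cancel₀ _ ha₂]
  · refine ⟨b.1 / a.1, Prod.ext ?_ ?_⟩
    · simp [div_mul_cancel₀ _ ha₁]
    · rw [Prod.smul_snd, smul_eq_mul, div_mul_eq_mul_div, eq_div_iff ha₁]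
      linear_combination h

theorem wedge_sub_right (ω θ θ' : RatF × RatF) :
    wedge ω (θ - θ') = wedge ω θ - wedge ω θ' := by
  simp only [wedge, Prod.fst_sub, Prod.snd_sub]; ring

theorem wedge_add_left (ω ω' θ : RatF × RatF) :
    wedge (ω + ω') θ = wedge ω θ + wedge ω' θ := by
  simp only [wedge, Prod.fst_add, Prod.snd_add]; ring

theorem wedge_smul_left (F : RatF) (ω θ : RatF × RatF) :
    wedge (F • ω) θ = F * wedge ω θ := by
  simp only [wedge, Prod.smul_fst, Prod.smul_snd, smul_eq_mul]; ring

theorem wedge_anticomm (ω θ : RatF × RatF) : wedge θ ω = -wedge ω θ := by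
  simp only [wedge]; ring

theorem extd_add (dx dy : Derivation ℂ RatF RatF) (ω θ : RatF × RatF) :
    extd dx dy (ω + θ) = extd dx dy ω + extd dx dy θ := by
  simp only [extd, Prod.fst_add, Prod.snd_add, map_add]; ring

theorem extd_smul (dx dy : Derivation ℂ RatF RatF) (F : RatF) (ω : RatF × RatF) :
    extd dx dy (F • ω) = F * extd dx dy ω + wedge (d0 dx dy F) ω := by
  simp only [extd, wedge, d0, Prod.smul_fst, Prod.smul_snd, smul_eq_mul, Derivation.leibniz]
  ring

theorem projTriple_same_first_two_general (dx dy : Derivation ℂ RatF RatF)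
    (Ω η ξ ξ' : RatF × RatF) (hΩ : Ω ≠ 0)
    (h : IsProjTriple dx dy Ω η ξ) (h' : IsProjTriple dx dy Ω η ξ') :
    ∃ F : RatF, ξ' = ξ + F • Ω ∧
      F * extd dx dy Ω = -(1 / 2) * wedge (d0 dx dy F) Ω := by
  obtain ⟨hΩη, hηξ, hξη⟩ := h
  obtain ⟨-, hηξ', hξ'η⟩ := h'
  have hwedge : wedge Ω (ξ' - ξ) = 0 := by rw [wedge_sub_right, ← hηξ, ← hηξ', sub_self]
  obtain ⟨F, hF⟩ := exists_smul_eq_of_mul_sub_mul_eq_zero hΩ hwedge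
  rw [sub_eq_iff_eq_add'] at hF
  refine ⟨F, hF, ?_⟩
  rw [hF, extd_add, extd_smul, wedge_add_left, wedge_smul_left, hξη, wedge_anticomm η Ω,
    ← hΩη] at hξ'η
  linear_combination hξ'η / 2

/-- Two projective triples sharing the first two entries differ by `F Ω` with
`F dΩ = -(1/2) dF ∧ Ω`. -/
theorem projTriple_same_first_two (dx dy : Derivation ℂ RatF RatF)
    (hext : ExtendsPartials dx dy) (Ω η ξ ξ' : RatF × RatF) (hΩ : Ω ≠ 0)
    (h : IsProjTriple dx dy Ω η ξ) (h' : IsProjTriple dx dy Ω η ξ') :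
    ∃ F : RatF, ξ' = ξ + F • Ω ∧
      F * extd dx dy Ω = -(1 / 2) * wedge (d0 dx dy F) Ω :=
  projTriple_same_first_two_general dx dy Ω η ξ ξ' hΩ h h'
end
end

section
/- Let a, b, c, p ∈ ℂ[x] be polynomials in the first variable only, viewed in K = ℂ(x,y), with p ≠ 0, and write p' = ∂x p. Consider the Riccati 1-form Ω := (−(y²·c − y·b − a), p), i.e. Ω = p dy − (y²c − yb − a)dx, and the 1-forms η' := ((p' − b + 2y·c)/p, 0) and ξ' := (2c/p², 0). Then (Ω, η', ξ') is a projective triple. -/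
open MvPolynomial

noncomputable section

/-- The image in `K = ℂ(x,y)` of a polynomial in the first variable only. -/
def ofPolyX (q : Polynomial ℂ) : RatF :=
  algebraMap (MvPolynomial (Fin 2) ℂ) RatF (Polynomial.aeval (X 0 : MvPolynomial (Fin 2) ℂ) q)

/-- The image of the variable `y` in `K = ℂ(x,y)`. -/
def yK : RatF := algebraMap (MvPolynomial (Fin 2) ℂ) RatF (X 1)

/-! The coefficients `a, b, c, p, p'` are constants for `∂y` and `∂y y = 1`, so the three
identities reduce to differentiating, with respect to `y`, expressions of degree at most two in `y`
with constant coefficients. For instance `dΩ = p' + ∂y (y²c - yb - a) = p' - b + 2yc = η' ∧ Ω`. -/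

lemma Derivation.map_ofNat {R A M : Type*} [CommSemiring R] [CommSemiring A] [Algebra R A]
    [AddCommMonoid M] [Module A M] [Module R M] (D : Derivation R A M) (n : ℕ) [n.AtLeastTwo] :
    D (OfNat.ofNat n : A) = 0 := by
  rw [← Nat.cast_ofNat, D.map_natCast]

section ConstantCoefficients

variable {R K : Type*} [CommRing R] [Field K] [Algebra R K] (D : Derivation R K K)
  {A B C P P' Y : K}

lemma Derivation.map_riccati_coeff (hA : D A = 0) (hB : D B = 0) (hC : D C = 0)
    (hY : D Y = 1) : D (Y ^ 2 * C - Y * B - A) = 2 * Y * C - B := by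
  simp only [map_sub, Derivation.leibniz, Derivation.leibniz_pow, hA, hB, hC, hY, smul_eq_mul]
  ring

lemma Derivation.map_riccati_eta (hP : D P = 0) (hP' : D P' = 0) (hB : D B = 0)
    (hC : D C = 0) (hY : D Y = 1) : D ((P' - B + 2 * Y * C) / P) = 2 * C / P := by
  rw [D.leibniz_div_const _ _ hP]
  simp only [map_add, map_sub, Derivation.leibniz, hP', hB, hC, hY, D.map_ofNat, smul_eq_mul]
  ring

lemma Derivation.map_riccati_xi (hP : D P = 0) (hC : D C = 0) : D (2 * C / P ^ 2) = 0 := by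
  rw [D.leibniz_div_const _ _ (by simp [Derivation.leibniz_pow, hP]), Derivation.leibniz, hC,
    D.map_ofNat]
  simp

end ConstantCoefficients

section PolynomialsInX

variable {dx dy : Derivation ℂ RatF RatF}

lemma ExtendsPartials.dx_ofPolyX (h : ExtendsPartials dx dy) (q : Polynomial ℂ) :
    dx (ofPolyX q) = ofPolyX (Polynomial.derivative q) := by
  rw [ofPolyX, h.1, Derivation.map_aeval]
  simp [ofPolyX, pderiv_X]

lemma ExtendsPartials.dy_ofPolyX (h : ExtendsPartials dx dy) (q : Polynomial ℂ) :
    dy (ofPolyX q) = 0 := by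
  rw [ofPolyX, h.2, Derivation.map_aeval]
  simp [pderiv_X]

lemma ExtendsPartials.dy_yK (h : ExtendsPartials dx dy) : dy yK = 1 := by
  simp [yK, h.2, pderiv_X]

end PolynomialsInX

lemma ofPolyX_ne_zero {q : Polynomial ℂ} (hq : q ≠ 0) : ofPolyX q ≠ 0 :=
  (IsFractionRing.injective (MvPolynomial (Fin 2) ℂ) RatF).ne
    ((Polynomial.toMvPolynomial_injective 0).ne hq) |>.trans_eq (by simp)

/-- The Riccati 1-form `Ω = p dy - (y²c - yb - a) dx` together with
`η' = ((p' - b + 2yc)/p) dx` and `ξ' = (2c/p²) dx` is a projective triple. -/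
theorem riccati_projTriple' (dx dy : Derivation ℂ RatF RatF)
    (hext : ExtendsPartials dx dy) (a b c p : Polynomial ℂ) (hp : p ≠ 0) :
    letI A : RatF := ofPolyX a
    letI B : RatF := ofPolyX b
    letI C : RatF := ofPolyX c
    letI P : RatF := ofPolyX p
    letI Ω : RatF × RatF := (-(yK ^ 2 * C - yK * B - A), P)
    letI η' : RatF × RatF := ((dx P - B + 2 * yK * C) / P, 0)
    letI ξ' : RatF × RatF := (2 * C / P ^ 2, 0)
    IsProjTriple dx dy Ω η' ξ' := by
  have hP : ofPolyX p ≠ 0 := ofPolyX_ne_zero hp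
  have hY := hext.dy_yK
  have hconst := hext.dy_ofPolyX
  simp only [IsProjTriple, extd, wedge, map_zero]
  refine ⟨?_, ?_, ?_⟩
  · rw [map_neg, dy.map_riccati_coeff (hconst a) (hconst b) (hconst c) hY]
    field_simp
    ring
  · rw [hext.dx_ofPolyX p, dy.map_riccati_eta (hconst p) (hconst _) (hconst b) (hconst c) hY]
    field_simp
    ring
  · rw [dy.map_riccati_xi (hconst p) (hconst c)]
    ring
end
end

section
/- Let a, b, p ∈ ℂ[x] be polynomials in the first variable only, viewed in K = ℂ(x,y), with p ≠ 0, and write p' = ∂x p. The rational 1-form η := ((p'+b)/p + 2a/(y·p), 2/y) is closed (i.e. dη = 0) if and only if a = 0. -/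
/-!
The coefficients `a`, `b`, `p`, `p'` do not depend on `y` and `∂x y = 0`, so the only surviving
term of `dη = ∂x (2/y) - ∂y η₁` is `-∂y (2a/(yp)) = 2a/(y²p)`. Since `p ≠ 0` and the embedding
`ℂ[x] → ℂ(x,y)` is injective, this vanishes exactly when `a = 0`.
-/

open MvPolynomial

noncomputable section

lemma ofPolyX_eq_aeval (q : Polynomial ℂ) :
    ofPolyX q = Polynomial.aeval (algebraMap (MvPolynomial (Fin 2) ℂ) RatF (X 0)) q :=
  (Polynomial.aeval_algHom_apply (IsScalarTower.toAlgHom ℂ (MvPolynomial (Fin 2) ℂ) RatF) _ q).symm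

lemma ofPolyX_injective : Function.Injective ofPolyX :=
  (IsFractionRing.injective (MvPolynomial (Fin 2) ℂ) RatF).comp
    (Polynomial.toMvPolynomial_injective 0)

lemma ofPolyX_eq_zero_iff {q : Polynomial ℂ} : ofPolyX q = 0 ↔ q = 0 :=
  ofPolyX_injective.eq_iff' (by simp [ofPolyX])

lemma yK_ne_zero : yK ≠ 0 :=
  (map_ne_zero_iff _ (IsFractionRing.injective (MvPolynomial (Fin 2) ℂ) RatF)).mpr (X_ne_zero 1)

lemma Derivation.map_ofPolyX (D : Derivation ℂ RatF RatF) (q : Polynomial ℂ) :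
    D (ofPolyX q) =
      ofPolyX (Polynomial.derivative q) * D (algebraMap (MvPolynomial (Fin 2) ℂ) RatF (X 0)) := by
  simp only [ofPolyX_eq_aeval, Derivation.map_aeval, smul_eq_mul]

namespace ExtendsPartials

variable {dx dy : Derivation ℂ RatF RatF}

lemma dx_ofPolyX_s6 (h : ExtendsPartials dx dy) (q : Polynomial ℂ) :
    dx (ofPolyX q) = ofPolyX (Polynomial.derivative q) := by
  rw [Derivation.map_ofPolyX, h.1, pderiv_X_self, map_one, mul_one]

lemma dy_ofPolyX_s6 (h : ExtendsPartials dx dy) (q : Polynomial ℂ) : dy (ofPolyX q) = 0 := by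
  rw [Derivation.map_ofPolyX, h.2, pderiv_X_of_ne zero_ne_one, map_zero, mul_zero]

lemma dx_yK (h : ExtendsPartials dx dy) : dx yK = 0 := by
  rw [yK, h.1, pderiv_X_of_ne one_ne_zero, map_zero]

lemma dy_yK_s6 (h : ExtendsPartials dx dy) : dy yK = 1 := by
  rw [yK, h.2, pderiv_X_self, map_one]

end ExtendsPartials

lemma extd_eq_of_dy_eq_zero (dx dy : Derivation ℂ RatF RatF) {y A B P : RatF}
    (hy : y ≠ 0) (hP : P ≠ 0) (hdxy : dx y = 0) (hdyy : dy y = 1)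
    (hA : dy A = 0) (hB : dy B = 0) (hdyP : dy P = 0) (hdydxP : dy (dx P) = 0) :
    extd dx dy ((dx P + B) / P + 2 * A / (y * P), 2 / y) = 2 * A / (y ^ 2 * P) := by
  have h2 : ∀ D : Derivation ℂ RatF RatF, D (2 : RatF) = 0 := fun D => D.map_natCast 2
  simp only [extd, map_add, Derivation.leibniz_div, Derivation.leibniz, smul_eq_mul,
    h2, hdxy, hdyy, hA, hB, hdyP, hdydxP]
  field_simp
  ring

/-- The 1-form `η = ((p'+b)/p + 2a/(yp)) dx + (2/y) dy` is closed iff `a = 0`. -/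
theorem riccati_eta_closed_iff (dx dy : Derivation ℂ RatF RatF)
    (hext : ExtendsPartials dx dy) (a b p : Polynomial ℂ) (hp : p ≠ 0) :
    letI A : RatF := ofPolyX a
    letI B : RatF := ofPolyX b
    letI P : RatF := ofPolyX p
    letI η : RatF × RatF := ((dx P + B) / P + 2 * A / (yK * P), 2 / yK)
    (extd dx dy η = 0 ↔ a = 0) := by
  have hP : ofPolyX p ≠ 0 := ofPolyX_eq_zero_iff.not.mpr hp
  have hdydxP : dy (dx (ofPolyX p)) = 0 := by rw [hext.dx_ofPolyX_s6, hext.dy_ofPolyX_s6]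
  rw [extd_eq_of_dy_eq_zero dx dy yK_ne_zero hP hext.dx_yK hext.dy_yK_s6 (hext.dy_ofPolyX_s6 a)
    (hext.dy_ofPolyX_s6 b) (hext.dy_ofPolyX_s6 p) hdydxP]
  simp [hP, yK_ne_zero, ofPolyX_eq_zero_iff]

end
end
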